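/- arXiv:1908.11776 — 2 statements merged into one kernel-verified Lean document; each statement's English description precedes it below -/
import Mathlib

section
/- For the unit disk D in the complex plane, the exponential transform E_D(w,z) = exp(-(1/π) ∫_D dA(ζ)/((ζ-w)(conj(ζ)-conj(z)))) equals 1 - 1/(w·conj(z)) for all |w| > 1 and |z| > 1. -/
open MeasureTheory Set Real

noncomputable section ExpTransformAux

open Complex in
/-- Angular integral: `∫_{-π}^{π} e^{ikθ} dθ = 0` for `k ≠ 0`. -/
lemma exp_transform_angular (k : ℤ) (hk : k ≠ 0) :
    ∫ θ in Ioo (-π) π, Complex.exp ((k : ℂ) * θ * Complex.I) = 0 := by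
  have hc : ((k : ℂ) * Complex.I) ≠ 0 := by
    simp [Complex.I_ne_zero, hk]
  have hrw : ∀ θ : ℝ, (k : ℂ) * θ * Complex.I = ((k : ℂ) * Complex.I) * θ := by
    intro θ; ring
  simp_rw [hrw]
  rw [← integral_Ioc_eq_integral_Ioo,
    ← intervalIntegral.integral_of_le (by linarith [Real.pi_pos] : -π ≤ π),
    integral_exp_mul_complex hc]
  have hu : Complex.exp ((k : ℂ) * Complex.I * π) * Complex.exp ((k : ℂ) * Complex.I * (-π)) = 1 := by
    rw [← Complex.exp_add]
    norm_num
  set u := Complex.exp ((k : ℂ) * Complex.I * π) with hu_def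
  have hsq : u * u = 1 := by
    have : u * u = Complex.exp ((k : ℂ) * ((2 : ℂ) * π * Complex.I)) := by
      rw [hu_def, ← Complex.exp_add]; ring_nf
    rw [this, Complex.exp_int_mul_two_pi_mul_I k]
  have key : Complex.exp ((k : ℂ) * Complex.I * ((-π : ℝ) : ℂ)) = u := by
    have h1 : Complex.exp ((k : ℂ) * Complex.I * ((-π : ℝ) : ℂ)) = u⁻¹ := by
      rw [inv_eq_one_div, eq_div_iff (Complex.exp_ne_zero _), ← Complex.exp_add,
        show (k : ℂ) * Complex.I * ((-π : ℝ) : ℂ) + (k : ℂ) * Complex.I * ((π : ℝ) : ℂ) = 0 by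
          push_cast; ring]
      exact Complex.exp_zero
    rw [h1, inv_eq_of_mul_eq_one_right hsq]
  rw [key]
  simp


open Complex in
/-- Moment integrals over the unit disk. -/
lemma exp_transform_moment (n m : ℕ) :
    ∫ ζ in {ζ : ℂ | ‖ζ‖ < 1}, ζ ^ n * ((starRingEnd ℂ) ζ) ^ m
      = if n = m then (π : ℂ) / (n + 1) else 0 := by
  have hD : MeasurableSet {ζ : ℂ | ‖ζ‖ < 1} :=
    measurableSet_lt measurable_norm measurable_const
  rw [← integral_indicator hD, ← Complex.integral_comp_polarCoord_symm, polarCoord_target]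
  have heq : EqOn
      (fun p : ℝ × ℝ => p.1 • Set.indicator {ζ : ℂ | ‖ζ‖ < 1}
          (fun ζ => ζ ^ n * ((starRingEnd ℂ) ζ) ^ m) (Complex.polarCoord.symm p))
      (fun p : ℝ × ℝ => (Set.indicator (Set.Ioo (0:ℝ) 1)
            (fun r => (r : ℂ) ^ (n + m + 1)) p.1) *
          Complex.exp (((((n : ℤ) - m : ℤ)) : ℂ) * p.2 * Complex.I))
      (Set.Ioi (0:ℝ) ×ˢ Set.Ioo (-π) π) := by
    rintro ⟨r, θ⟩ ⟨hr, hθ⟩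
    simp only [Set.mem_Ioi] at hr
    have hsymm : Complex.polarCoord.symm (r, θ) = (r : ℂ) * Complex.exp (θ * Complex.I) := by
      rw [Complex.polarCoord_symm_apply, Complex.exp_mul_I, Complex.ofReal_cos,
        Complex.ofReal_sin]
    have hnorm : ‖Complex.polarCoord.symm (r, θ)‖ = r := by
      rw [hsymm, norm_mul, Complex.norm_real, Real.norm_eq_abs,
        Complex.norm_exp_ofReal_mul_I, mul_one, abs_of_pos hr]
    have hconj : (starRingEnd ℂ) ((r : ℂ) * Complex.exp (θ * Complex.I))
        = (r : ℂ) * Complex.exp (-(θ * Complex.I)) := by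
      rw [map_mul, Complex.conj_ofReal, ← Complex.exp_conj, map_mul, Complex.conj_ofReal,
        Complex.conj_I, mul_neg]
    have hval : ((r : ℂ) * Complex.exp (θ * Complex.I)) ^ n *
          ((r : ℂ) * Complex.exp (-(θ * Complex.I))) ^ m
        = (r : ℂ) ^ (n + m) * Complex.exp (((((n : ℤ) - m : ℤ)) : ℂ) * θ * Complex.I) := by
      rw [mul_pow, mul_pow, ← Complex.exp_nat_mul, ← Complex.exp_nat_mul, pow_add]
      rw [show ((r:ℂ)^n * Complex.exp ((n:ℂ) * (θ * Complex.I))) *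
            ((r:ℂ)^m * Complex.exp ((m:ℂ) * -(θ * Complex.I)))
          = (r:ℂ)^n * (r:ℂ)^m *
            (Complex.exp ((n:ℂ) * (θ * Complex.I)) * Complex.exp ((m:ℂ) * -(θ * Complex.I)))
          by ring, ← Complex.exp_add]
      congr 1
      push_cast
      ring
    by_cases hr1 : r < 1
    · have hmem : Complex.polarCoord.symm (r, θ) ∈ {ζ : ℂ | ‖ζ‖ < 1} := by
        simp only [Set.mem_setOf_eq, hnorm]; exact hr1
      have hmem' : r ∈ Set.Ioo (0:ℝ) 1 := ⟨hr, hr1⟩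
      have hmem2 : (r : ℂ) * Complex.exp (θ * Complex.I) ∈ {ζ : ℂ | ‖ζ‖ < 1} := hsymm ▸ hmem
      simp only [hsymm, Set.indicator_of_mem hmem2, Set.indicator_of_mem hmem', hconj, hval,
        smul_eq_mul, Complex.real_smul]
      push_cast
      ring
    · have hmem : Complex.polarCoord.symm (r, θ) ∉ {ζ : ℂ | ‖ζ‖ < 1} := by
        simp only [Set.mem_setOf_eq, hnorm]; exact hr1
      have hmem' : r ∉ Set.Ioo (0:ℝ) 1 := fun h => hr1 h.2
      simp only [Set.indicator_of_notMem hmem, Set.indicator_of_notMem hmem', smul_zero,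
        zero_mul]
  rw [setIntegral_congr_fun (measurableSet_Ioi.prod measurableSet_Ioo) heq, Measure.volume_eq_prod,
    setIntegral_prod_mul (L := ℂ) (Set.indicator (Set.Ioo (0:ℝ) 1) (fun r => (r:ℂ)^(n+m+1)))
      (fun θ : ℝ => Complex.exp ((((n : ℤ) - m : ℤ) : ℂ) * θ * Complex.I))
      (Set.Ioi (0:ℝ)) (Set.Ioo (-π) π)]
  have hrad : (∫ r in Set.Ioi (0:ℝ), Set.indicator (Set.Ioo (0:ℝ) 1)
      (fun r => (r : ℂ) ^ (n + m + 1)) r) = ((n : ℂ) + m + 2)⁻¹ := by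
    rw [setIntegral_indicator measurableSet_Ioo,
      Set.inter_eq_self_of_subset_right Set.Ioo_subset_Ioi_self]
    have : (∫ r in Set.Ioo (0:ℝ) 1, (r : ℂ) ^ (n + m + 1))
        = ((∫ r in Set.Ioo (0:ℝ) 1, r ^ (n + m + 1) : ℝ) : ℂ) := by
      simp only [← Complex.ofReal_pow]
      exact integral_ofReal
    rw [this, ← integral_Ioc_eq_integral_Ioo, ← intervalIntegral.integral_of_le zero_le_one,
      integral_pow]
    push_cast
    rw [one_pow, zero_pow (by omega), sub_zero]
    rw [show ((n:ℂ) + m + 1 + 1) = (n:ℂ) + m + 2 by ring]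
    exact one_div _
  rw [hrad]
  by_cases hnm : n = m
  · subst hnm
    simp only [sub_self, Int.cast_zero, zero_mul, Complex.exp_zero, if_pos rfl]
    rw [integral_const]
    simp only [measureReal_def, MeasurableSet.univ, Measure.restrict_apply, Set.univ_inter, Real.volume_Ioo,
      sub_neg_eq_add, smul_eq_mul, mul_one, eq_self_iff_true, if_true, Complex.real_smul,
      Complex.ofReal_add]
    rw [ENNReal.toReal_ofReal (by positivity : (0:ℝ) ≤ π + π)]
    have hn1 : ((n : ℂ) + 1) ≠ 0 := by
      have h := Nat.cast_ne_zero (R := ℂ).mpr (Nat.succ_ne_zero n)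
      push_cast at h
      exact h
    have hn2 : ((n : ℂ) + n + 2) ≠ 0 := by
      intro h
      have : ((2 : ℂ)) * ((n : ℂ) + 1) = 0 := by rw [← h]; ring
      simp [hn1] at this
    have hn3 : (2 : ℂ) + n * 2 ≠ 0 := by
      intro h; apply hn2; linear_combination h
    push_cast
    field_simp
    linear_combination mul_inv_cancel₀ hn3
  · have hk : ((n : ℤ) - m) ≠ 0 := by
      intro h
      exact hnm (by exact_mod_cast sub_eq_zero.mp h)
    rw [exp_transform_angular _ hk, mul_zero, if_neg hnm]

end ExpTransformAux

open MeasureTheory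

/-- The exponential transform of the open unit disk `D = {ζ : ‖ζ‖ < 1}` equals
`1 - 1/(w * conj z)` for `‖w‖ > 1` and `‖z‖ > 1`.  Here the integral is taken
with respect to two-dimensional Lebesgue (area) measure on `ℂ`. -/
theorem exponential_transform_unit_disk (w z : ℂ) (hw : 1 < ‖w‖) (hz : 1 < ‖z‖) :
    Complex.exp (-(1 / (Real.pi : ℂ)) *
        ∫ ζ in {ζ : ℂ | ‖ζ‖ < 1},
          ((ζ - w) * ((starRingEnd ℂ) ζ - (starRingEnd ℂ) z))⁻¹)
      = 1 - 1 / (w * (starRingEnd ℂ) z) := by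
  classical
  have hpi : (Real.pi : ℂ) ≠ 0 := Complex.ofReal_ne_zero.mpr Real.pi_ne_zero
  have hw0 : w ≠ 0 := by
    intro h; rw [h] at hw; simp at hw; linarith
  have hz0 : (starRingEnd ℂ) z ≠ 0 := by
    intro h
    have : ‖(starRingEnd ℂ) z‖ = 0 := by rw [h, norm_zero]
    rw [RCLike.norm_conj] at this
    linarith
  set a : ℂ := w⁻¹ with ha_def
  set b : ℂ := ((starRingEnd ℂ) z)⁻¹ with hb_def
  have hwa : w * a = 1 := mul_inv_cancel₀ hw0
  have hzb : (starRingEnd ℂ) z * b = 1 := mul_inv_cancel₀ hz0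
  have ha : ‖a‖ < 1 := by
    rw [ha_def, norm_inv]; exact inv_lt_one_of_one_lt₀ hw
  have hb : ‖b‖ < 1 := by
    rw [hb_def, norm_inv, RCLike.norm_conj]; exact inv_lt_one_of_one_lt₀ hz
  have hab : ‖a * b‖ < 1 := by
    rw [norm_mul]; nlinarith [norm_nonneg a, norm_nonneg b]
  set D : Set ℂ := {ζ : ℂ | ‖ζ‖ < 1} with hD_def
  have hD : MeasurableSet D := measurableSet_lt measurable_norm measurable_const
  set F : ℕ × ℕ → ℂ → ℂ := fun p ζ =>
    a ^ (p.1 + 1) * b ^ (p.2 + 1) * (ζ ^ p.1 * ((starRingEnd ℂ) ζ) ^ p.2) with hF_def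
  -- series expansion of the integrand
  have hexp : ∀ ζ ∈ D, ((ζ - w) * ((starRingEnd ℂ) ζ - (starRingEnd ℂ) z))⁻¹
      = ∑' p : ℕ × ℕ, F p ζ := by
    intro ζ hζ
    have hζ1 : ‖ζ‖ < 1 := hζ
    have h1 : ‖a * ζ‖ < 1 := by
      rw [norm_mul]; nlinarith [norm_nonneg a, norm_nonneg ζ]
    have h2 : ‖b * (starRingEnd ℂ) ζ‖ < 1 := by
      rw [norm_mul, RCLike.norm_conj]; nlinarith [norm_nonneg b, norm_nonneg ζ]
    have hne1 : (1 : ℂ) - a * ζ ≠ 0 := by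
      intro h
      have h' : (1 : ℂ) = a * ζ := by linear_combination h
      rw [← h', norm_one] at h1; linarith
    have hne2 : (1 : ℂ) - b * (starRingEnd ℂ) ζ ≠ 0 := by
      intro h
      have h' : (1 : ℂ) = b * (starRingEnd ℂ) ζ := by linear_combination h
      rw [← h', norm_one] at h2; linarith
    have e1 : (ζ - w)⁻¹ = -a * (1 - a * ζ)⁻¹ := by
      refine inv_eq_of_mul_eq_one_right ?_
      have hfac : ζ - w = -(w * (1 - a * ζ)) := by
        have h3 : w * (a * ζ) = ζ := by rw [← mul_assoc, hwa, one_mul]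
        linear_combination -h3
      rw [hfac]
      calc -(w * (1 - a * ζ)) * (-a * (1 - a * ζ)⁻¹)
          = (w * a) * ((1 - a * ζ) * (1 - a * ζ)⁻¹) := by ring
        _ = 1 := by rw [hwa, mul_inv_cancel₀ hne1, one_mul]
    have e2 : ((starRingEnd ℂ) ζ - (starRingEnd ℂ) z)⁻¹
        = -b * (1 - b * (starRingEnd ℂ) ζ)⁻¹ := by
      refine inv_eq_of_mul_eq_one_right ?_
      have hfac : (starRingEnd ℂ) ζ - (starRingEnd ℂ) z
          = -((starRingEnd ℂ) z * (1 - b * (starRingEnd ℂ) ζ)) := by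
        have h3 : (starRingEnd ℂ) z * (b * (starRingEnd ℂ) ζ) = (starRingEnd ℂ) ζ := by
          rw [← mul_assoc, hzb, one_mul]
        linear_combination -h3
      rw [hfac]
      calc -((starRingEnd ℂ) z * (1 - b * (starRingEnd ℂ) ζ)) *
            (-b * (1 - b * (starRingEnd ℂ) ζ)⁻¹)
          = ((starRingEnd ℂ) z * b) *
            ((1 - b * (starRingEnd ℂ) ζ) * (1 - b * (starRingEnd ℂ) ζ)⁻¹) := by ring
        _ = 1 := by rw [hzb, mul_inv_cancel₀ hne2, one_mul]
    have hs1 : Summable fun n : ℕ => ‖(a * ζ) ^ n‖ := by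
      simpa only [norm_pow] using summable_geometric_of_lt_one (norm_nonneg _) h1
    have hs2 : Summable fun n : ℕ => ‖(b * (starRingEnd ℂ) ζ) ^ n‖ := by
      simpa only [norm_pow] using summable_geometric_of_lt_one (norm_nonneg _) h2
    rw [mul_inv, e1, e2,
      show (-a * (1 - a * ζ)⁻¹) * (-b * (1 - b * (starRingEnd ℂ) ζ)⁻¹)
        = (a * b) * ((1 - a * ζ)⁻¹ * (1 - b * (starRingEnd ℂ) ζ)⁻¹) by ring,
      ← tsum_geometric_of_norm_lt_one h1, ← tsum_geometric_of_norm_lt_one h2,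
      tsum_mul_tsum_of_summable_norm hs1 hs2, ← tsum_mul_left]
    refine tsum_congr fun p => ?_
    simp only [hF_def, mul_pow]
    ring
  -- measurability
  have hmeas : ∀ p : ℕ × ℕ, AEStronglyMeasurable (F p) (volume.restrict D) := by
    intro p
    refine Continuous.aestronglyMeasurable ?_
    exact continuous_const.mul ((continuous_pow p.1).mul
      ((Complex.continuous_conj.pow p.2)))
  -- finiteness of the sum of lintegrals
  have hvol : volume D < ⊤ := by
    have hsub : D ⊆ Metric.ball (0 : ℂ) 1 := by
      intro ζ hζ; exact mem_ball_zero_iff.mpr hζ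
    exact lt_of_le_of_lt (measure_mono hsub) measure_ball_lt_top
  have hbound : ∑' p : ℕ × ℕ, ∫⁻ ζ in D, ‖F p ζ‖₊ ∂volume ≠ ⊤ := by
    have hle : ∀ p : ℕ × ℕ, (∫⁻ ζ in D, ‖F p ζ‖₊ ∂volume)
        ≤ ((‖a‖₊ : ENNReal) ^ (p.1 + 1) * (‖b‖₊ : ENNReal) ^ (p.2 + 1)) * volume D := by
      intro p
      calc (∫⁻ ζ in D, ‖F p ζ‖₊ ∂volume)
          ≤ ∫⁻ _ in D, ((‖a‖₊ : ENNReal) ^ (p.1 + 1) * (‖b‖₊ : ENNReal) ^ (p.2 + 1)) ∂volume := by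
            refine setLIntegral_mono' hD fun ζ hζ => ?_
            have hz1 : ‖ζ‖₊ ≤ 1 := by
              rw [← NNReal.coe_le_coe]; simpa using le_of_lt hζ
            have key : ‖F p ζ‖₊ ≤ ‖a‖₊ ^ (p.1 + 1) * ‖b‖₊ ^ (p.2 + 1) := by
              calc ‖F p ζ‖₊
                  = ‖a‖₊ ^ (p.1 + 1) * ‖b‖₊ ^ (p.2 + 1) * (‖ζ‖₊ ^ p.1 * ‖ζ‖₊ ^ p.2) := by
                    simp [hF_def, nnnorm_mul, nnnorm_pow, RCLike.nnnorm_conj, mul_assoc]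
                _ ≤ ‖a‖₊ ^ (p.1 + 1) * ‖b‖₊ ^ (p.2 + 1) * 1 := by
                    refine mul_le_mul_right ?_ _
                    exact mul_le_one' (pow_le_one' hz1 _) (pow_le_one' hz1 _)
                _ = ‖a‖₊ ^ (p.1 + 1) * ‖b‖₊ ^ (p.2 + 1) := mul_one _
            exact_mod_cast key
        _ = ((‖a‖₊ : ENNReal) ^ (p.1 + 1) * (‖b‖₊ : ENNReal) ^ (p.2 + 1)) * volume D := by
            rw [setLIntegral_const]
    refine ne_top_of_le_ne_top ?_ (ENNReal.tsum_le_tsum hle)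
    have hA : (‖a‖₊ : ENNReal) < 1 := by
      rw [← ENNReal.coe_one, ENNReal.coe_lt_coe, ← NNReal.coe_lt_coe]; simpa using ha
    have hB : (‖b‖₊ : ENNReal) < 1 := by
      rw [← ENNReal.coe_one, ENNReal.coe_lt_coe, ← NNReal.coe_lt_coe]; simpa using hb
    have hfact : (∑' p : ℕ × ℕ,
          ((‖a‖₊ : ENNReal) ^ (p.1 + 1) * (‖b‖₊ : ENNReal) ^ (p.2 + 1)) * volume D)
        = (∑' n : ℕ, (‖a‖₊ : ENNReal) ^ (n + 1)) *
          ((∑' m : ℕ, (‖b‖₊ : ENNReal) ^ (m + 1)) * volume D) := by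
      have inner : ∀ n : ℕ, (∑' m : ℕ,
            ((‖a‖₊ : ENNReal) ^ (n + 1) * (‖b‖₊ : ENNReal) ^ (m + 1)) * volume D)
          = (‖a‖₊ : ENNReal) ^ (n + 1) * ((∑' m : ℕ, (‖b‖₊ : ENNReal) ^ (m + 1)) * volume D) := by
        intro n
        rw [← ENNReal.tsum_mul_right, ← ENNReal.tsum_mul_left]
        exact tsum_congr fun m => by ring
      rw [ENNReal.tsum_prod']
      simp_rw [inner]
      rw [ENNReal.tsum_mul_right]
    rw [hfact, ENNReal.tsum_geometric_add_one, ENNReal.tsum_geometric_add_one]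
    have h1a : (1 : ENNReal) - (‖a‖₊ : ENNReal) ≠ 0 := (tsub_pos_of_lt hA).ne'
    have h1b : (1 : ENNReal) - (‖b‖₊ : ENNReal) ≠ 0 := (tsub_pos_of_lt hB).ne'
    exact ENNReal.mul_ne_top
      (ENNReal.mul_ne_top ENNReal.coe_ne_top (ENNReal.inv_ne_top.mpr h1a))
      (ENNReal.mul_ne_top
        (ENNReal.mul_ne_top ENNReal.coe_ne_top (ENNReal.inv_ne_top.mpr h1b)) hvol.ne)
  -- swap integral and sum
  have hswap : (∫ ζ in D, ((ζ - w) * ((starRingEnd ℂ) ζ - (starRingEnd ℂ) z))⁻¹)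
      = ∑' p : ℕ × ℕ, ∫ ζ in D, F p ζ := by
    rw [setIntegral_congr_fun hD hexp]
    exact integral_tsum hmeas hbound
  -- each term via the moment integrals
  have hterm : ∀ p : ℕ × ℕ, (∫ ζ in D, F p ζ)
      = a ^ (p.1 + 1) * b ^ (p.2 + 1) *
          (if p.1 = p.2 then (Real.pi : ℂ) / (p.1 + 1) else 0) := by
    intro p
    simp only [hF_def]
    rw [MeasureTheory.integral_const_mul, exp_transform_moment]
  -- sum the diagonal
  have hne : (1 : ℂ) - a * b ≠ 0 := by
    intro h
    have h' : (1 : ℂ) = a * b := by linear_combination h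
    rw [← h', norm_one] at hab; linarith
  have hdiag : (∑' p : ℕ × ℕ, a ^ (p.1 + 1) * b ^ (p.2 + 1) *
        (if p.1 = p.2 then (Real.pi : ℂ) / (p.1 + 1) else 0))
      = -(Real.pi : ℂ) * Complex.log (1 - a * b) := by
    have hinj : Function.Injective (fun n : ℕ => ((n, n) : ℕ × ℕ)) := by
      intro x y h; exact congrArg Prod.fst h
    have hsupp : Function.support (fun p : ℕ × ℕ => a ^ (p.1 + 1) * b ^ (p.2 + 1) *
        (if p.1 = p.2 then (Real.pi : ℂ) / (p.1 + 1) else 0))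
        ⊆ Set.range (fun n : ℕ => ((n, n) : ℕ × ℕ)) := by
      rintro ⟨n, m⟩ hp
      by_cases h : n = m
      · exact ⟨n, by simp [h]⟩
      · simp only [Function.mem_support, if_neg h, mul_zero, ne_eq, not_true_eq_false] at hp
    rw [← Function.Injective.tsum_eq hinj hsupp]
    simp only [if_pos rfl]
    have hs := Complex.hasSum_taylorSeries_neg_log hab
    have hs1 : HasSum (fun n : ℕ => (a * b) ^ (n + 1) / ((n : ℂ) + 1))
        (-Complex.log (1 - a * b)) := by
      have h' := (hasSum_nat_add_iff' 1).mpr hs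
      simpa using h'
    have hs2 := hs1.mul_left (Real.pi : ℂ)
    rw [show -(Real.pi : ℂ) * Complex.log (1 - a * b)
        = (Real.pi : ℂ) * -Complex.log (1 - a * b) by ring, ← hs2.tsum_eq]
    refine tsum_congr fun n => ?_
    simp only [if_true]
    rw [mul_pow]
    ring
  have harg : -(1 / (Real.pi : ℂ)) * (-(Real.pi : ℂ) * Complex.log (1 - a * b))
      = Complex.log (1 - a * b) := by
    field_simp
  rw [hswap, tsum_congr hterm, hdiag, harg, Complex.exp_log hne]
  congr 1
  rw [ha_def, hb_def, ← mul_inv, one_div]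
end

section
/- If T is a bounded operator on a Hilbert space with rank-one self-commutator [T*,T] = ⟨·, ξ⟩ξ for some vector ξ, then for |z|, |w| > ‖T‖ one has det[(T−w)(T*−conj(z))(T−w)^{-1}(T*−conj(z))^{-1}] = 1 − ⟨(T*−conj(z))^{-1}ξ, (T*−conj(w))^{-1}ξ⟩. -/
open scoped InnerProductSpace
open ContinuousLinearMap

section Aux

variable {H : Type*} [NormedAddCommGroup H] [InnerProductSpace ℂ H] [CompleteSpace H]

lemma aux_isUnit_sub (T : H →L[ℂ] H) (w : ℂ) (h : ‖T‖ < ‖w‖) : IsUnit (T - w • 1) := by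
  have hw : w ≠ 0 := by
    intro h0
    rw [h0, norm_zero] at h
    exact (norm_nonneg T).not_gt h
  have hnorm : ‖w⁻¹ • T‖ < 1 := by
    rw [norm_smul, norm_inv]
    rw [inv_mul_lt_one₀ (lt_of_le_of_lt (norm_nonneg T) h)]
    exact h
  have h1 : IsUnit ((1 : H →L[ℂ] H) - w⁻¹ • T) := isUnit_one_sub_of_norm_lt_one hnorm
  have h2 : IsUnit ((-w) • (1 : H →L[ℂ] H)) := by
    refine ⟨⟨(-w) • 1, (-w)⁻¹ • 1, ?_, ?_⟩, rfl⟩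
    · rw [smul_mul_assoc, one_mul, smul_smul, mul_inv_cancel₀ (neg_ne_zero.2 hw), one_smul]
    · rw [smul_mul_assoc, one_mul, smul_smul, inv_mul_cancel₀ (neg_ne_zero.2 hw), one_smul]
  have h3 : T - w • 1 = ((-w) • (1 : H →L[ℂ] H)) * ((1 : H →L[ℂ] H) - w⁻¹ • T) := by
    rw [smul_mul_assoc, one_mul, smul_sub, smul_smul]
    rw [neg_mul, mul_inv_cancel₀ hw]
    simp [sub_eq_add_neg, add_comm]
  rw [h3]
  exact h2.mul h1

lemma aux_adjoint_inverse (A : H →L[ℂ] H) (hA : IsUnit A) :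
    ContinuousLinearMap.adjoint (Ring.inverse A) = Ring.inverse (ContinuousLinearMap.adjoint A) := by
  obtain ⟨u, rfl⟩ := hA
  have hmul : ∀ X Y : H →L[ℂ] H, ContinuousLinearMap.adjoint (X * Y)
      = ContinuousLinearMap.adjoint Y * ContinuousLinearMap.adjoint X := fun X Y =>
    ContinuousLinearMap.adjoint_comp X Y
  have h1 : ContinuousLinearMap.adjoint (u : H →L[ℂ] H)
      * ContinuousLinearMap.adjoint (↑u⁻¹ : H →L[ℂ] H) = 1 := by
    rw [← hmul, u.inv_mul]; exact ContinuousLinearMap.adjoint_id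
  have h2 : ContinuousLinearMap.adjoint (↑u⁻¹ : H →L[ℂ] H)
      * ContinuousLinearMap.adjoint (u : H →L[ℂ] H) = 1 := by
    rw [← hmul, u.mul_inv]; exact ContinuousLinearMap.adjoint_id
  let v : (H →L[ℂ] H)ˣ :=
    ⟨ContinuousLinearMap.adjoint (u : H →L[ℂ] H),
      ContinuousLinearMap.adjoint (↑u⁻¹ : H →L[ℂ] H), h1, h2⟩
  have : Ring.inverse ((v : H →L[ℂ] H)) = (↑v⁻¹ : H →L[ℂ] H) := Ring.inverse_unit v
  rw [Ring.inverse_unit u]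
  exact this.symm

end Aux

/-- Let `T` be a bounded operator with rank-one self-commutator `[T*,T] = ⟨·,ξ⟩ξ`.
For `|z|, |w| > ‖T‖` the multiplicative commutator
`P = (T−w)(T*−conj z)(T−w)⁻¹(T*−conj z)⁻¹` differs from the identity by an operator of
rank at most one, so its Fredholm determinant is `det P = 1 + Tr(P − I)`; the claim
`det P = 1 − ⟨(T*−conj z)⁻¹ξ, (T*−conj w)⁻¹ξ⟩` is the statement that, in any orthonormal
Hilbert basis, the diagonal series of `P − I` sums to
`−⟨(T*−conj z)⁻¹ξ, (T*−conj w)⁻¹ξ⟩`. -/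
theorem rank_one_selfCommutator_determinant_formula
    {H : Type*} [NormedAddCommGroup H] [InnerProductSpace ℂ H] [CompleteSpace H]
    (T : H →L[ℂ] H) (ξ : H)
    (hcom : ∀ x : H, (ContinuousLinearMap.adjoint T * T - T * ContinuousLinearMap.adjoint T) x
      = ⟪ξ, x⟫_ℂ • ξ)
    (z w : ℂ) (hz : ‖T‖ < ‖z‖) (hw : ‖T‖ < ‖w‖) :
    ∀ b : HilbertBasis ℕ ℂ H,
      HasSum
        (fun n => ⟪b n,
          ((T - w • 1) * (ContinuousLinearMap.adjoint T - (starRingEnd ℂ z) • 1)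
            * Ring.inverse (T - w • 1)
            * Ring.inverse (ContinuousLinearMap.adjoint T - (starRingEnd ℂ z) • 1)
           - 1) (b n)⟫_ℂ)
        (-(⟪Ring.inverse (ContinuousLinearMap.adjoint T - (starRingEnd ℂ w) • 1) ξ,
            Ring.inverse (ContinuousLinearMap.adjoint T - (starRingEnd ℂ z) • 1) ξ⟫_ℂ)) := by
  intro b
  set T' := ContinuousLinearMap.adjoint T with hT'
  set A : H →L[ℂ] H := T - w • 1 with hAdef
  set B : H →L[ℂ] H := T' - (starRingEnd ℂ z) • 1 with hBdef
  have hnormT' : ‖T'‖ = ‖T‖ := by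
    rw [hT']
    exact LinearIsometryEquiv.norm_map (ContinuousLinearMap.adjoint) T
  have hA : IsUnit A := aux_isUnit_sub T w hw
  have hB : IsUnit B := by
    refine aux_isUnit_sub T' (starRingEnd ℂ z) ?_
    rw [hnormT']
    simpa using hz
  set A' : H →L[ℂ] H := Ring.inverse A with hA'def
  set B' : H →L[ℂ] H := Ring.inverse B with hB'def
  have hAA' : A * A' = 1 := Ring.mul_inverse_cancel A hA
  have hBB' : B * B' = 1 := Ring.mul_inverse_cancel B hB
  set K : H →L[ℂ] H := T' * T - T * T' with hKdef
  have hBA : B * A - A * B = K := by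
    rw [hAdef, hBdef, hKdef]
    simp only [sub_mul, mul_sub, smul_sub, smul_mul_assoc, mul_smul_comm, one_mul, mul_one,
      smul_smul]
    module
  have hcollapse : B * A * (A' * B') = 1 := by
    rw [mul_assoc, ← mul_assoc A A' B', hAA', one_mul, hBB']
  have key : A * B * A' * B' - 1 = -(K * (A' * B')) := by
    rw [mul_assoc (A * B) A' B', ← hBA]
    conv_rhs => rw [sub_mul, neg_sub]
    rw [hcollapse]
  -- pointwise formula
  set η : H := ContinuousLinearMap.adjoint (A' * B') ξ with hηdef
  have hfun : ∀ n : ℕ,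
      ⟪b n, (A * B * A' * B' - 1) (b n)⟫_ℂ = -(⟪η, b n⟫_ℂ * ⟪b n, ξ⟫_ℂ) := by
    intro n
    rw [key, ContinuousLinearMap.neg_apply, ContinuousLinearMap.mul_apply, hcom,
      inner_neg_right, inner_smul_right, ← ContinuousLinearMap.adjoint_inner_left (A' * B')]
  have hsum := (b.hasSum_inner_mul_inner η ξ).neg
  have hfe : (fun n => ⟪b n, (A * B * A' * B' - 1) (b n)⟫_ℂ)
      = fun n => -(⟪η, b n⟫_ℂ * ⟪b n, ξ⟫_ℂ) := funext hfun
  -- identify the limit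
  have hadjA : ContinuousLinearMap.adjoint A = T' - (starRingEnd ℂ w) • 1 := by
    rw [hAdef, hT']
    rw [map_sub]
    congr 1
    rw [LinearIsometryEquiv.map_smulₛₗ]
    congr 1
    exact ContinuousLinearMap.adjoint_id
  have hηξ : ⟪η, ξ⟫_ℂ
      = ⟪Ring.inverse (T' - (starRingEnd ℂ w) • 1) ξ, B' ξ⟫_ℂ := by
    rw [hηdef]
    have hadjmul : ContinuousLinearMap.adjoint (A' * B')
        = ContinuousLinearMap.adjoint B' * ContinuousLinearMap.adjoint A' :=
      ContinuousLinearMap.adjoint_comp A' B'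
    rw [hadjmul]
    have : (ContinuousLinearMap.adjoint B' * ContinuousLinearMap.adjoint A') ξ
        = ContinuousLinearMap.adjoint B' (ContinuousLinearMap.adjoint A' ξ) := rfl
    rw [this, ContinuousLinearMap.adjoint_inner_left]
    congr 1
    rw [hA'def, aux_adjoint_inverse A hA, hadjA]
  rw [hfe, ← hηξ]
  exact hsum
end
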